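/- Let Φ be an n×n diagonal matrix with entries in {0,1}, let γ ∈ ℝ, and set U = X ⊗ (I_n − Φ) + Z ⊗ Φ and U_γ = ((exp(iγZ) ⊗ I_n) · U)². Then U_γ = I_{2} ⊗ I_n + (exp(2iγZ) − I_2) ⊗ Φ, where exp(iγZ) denotes the matrix exponential of iγZ (equal to diag(e^{iγ}, e^{-iγ})). -/

import Mathlib

open Matrix Kronecker

/-! With `A = exp(iγZ)`, the product `(A ⊗ I)·U` is `AX ⊗ (I − Φ) + AZ ⊗ Φ`. Since `Φ` and `I − Φ`
are complementary idempotents, its square is `(AX)² ⊗ (I − Φ) + (AZ)² ⊗ Φ`. As `X` anticommutes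
with `Z`, `X·A = A⁻¹·X`, so `(AX)² = I`; as `A` commutes with `Z` and `Z² = I`,
`(AZ)² = A² = exp(2iγZ)`. -/

open NormedSpace

namespace Matrix

variable {R l m n p : Type*}

theorem sub_kronecker [Ring R] (A₁ A₂ : Matrix l m R) (B : Matrix n p R) :
    (A₁ - A₂) ⊗ₖ B = A₁ ⊗ₖ B - A₂ ⊗ₖ B := by
  ext ⟨_, _⟩ ⟨_, _⟩
  simp [sub_mul]

theorem kronecker_sub [Ring R] (A : Matrix l m R) (B₁ B₂ : Matrix n p R) :
    A ⊗ₖ (B₁ - B₂) = A ⊗ₖ B₁ - A ⊗ₖ B₂ := by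
  ext ⟨_, _⟩ ⟨_, _⟩
  simp [mul_sub]

theorem isIdempotentElem_diagonal [Fintype n] [DecidableEq n] [NonUnitalNonAssocSemiring R]
    {d : n → R} (hd : ∀ i, IsIdempotentElem (d i)) : IsIdempotentElem (diagonal d) := by
  rw [isIdempotentElem_iff, diagonal_mul_diagonal]
  exact congrArg diagonal (funext hd)

theorem kronecker_one_mul_kronecker_add_kronecker [CommRing R] [Fintype m] [Fintype n]
    [DecidableEq n] (A M N : Matrix m m R) (P Q : Matrix n n R) :
    (A ⊗ₖ (1 : Matrix n n R)) * (M ⊗ₖ P + N ⊗ₖ Q) = (A * M) ⊗ₖ P + (A * N) ⊗ₖ Q := by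
  rw [Matrix.mul_add, ← mul_kronecker_mul, ← mul_kronecker_mul, Matrix.one_mul, Matrix.one_mul]

variable [CommRing R] [Fintype m] [DecidableEq m] [Fintype n] [DecidableEq n]

theorem kronecker_one_sub_add_kronecker_sq {Q : Matrix n n R} (hQ : IsIdempotentElem Q)
    (M N : Matrix m m R) :
    (M ⊗ₖ (1 - Q) + N ⊗ₖ Q) ^ 2 = (M * M) ⊗ₖ (1 - Q) + (N * N) ⊗ₖ Q := by
  rw [sq, Matrix.add_mul, Matrix.mul_add, Matrix.mul_add, ← mul_kronecker_mul,
    ← mul_kronecker_mul, ← mul_kronecker_mul, ← mul_kronecker_mul, hQ.one_sub.eq, hQ.eq,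
    hQ.one_sub_mul_self, hQ.mul_one_sub_self, kronecker_zero, kronecker_zero, add_zero, zero_add]

theorem kronecker_one_sub_add_kronecker_sq_of_mul_self_eq_one {Q : Matrix n n R}
    (hQ : IsIdempotentElem Q) {M : Matrix m m R} (hM : M * M = 1) (N : Matrix m m R) :
    (M ⊗ₖ (1 - Q) + N ⊗ₖ Q) ^ 2 =
      (1 : Matrix m m R) ⊗ₖ (1 : Matrix n n R) + (N * N - 1) ⊗ₖ Q := by
  rw [kronecker_one_sub_add_kronecker_sq hQ, hM, kronecker_sub, sub_kronecker]
  abel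

end Matrix

section ExpAnticommute

variable {𝔸 : Type*} [NormedRing 𝔸] [NormedAlgebra ℚ 𝔸] [CompleteSpace 𝔸]

theorem exp_mul_sq_of_anticommute {a x : 𝔸} (hx : x * x = 1) (hax : x * a = -a * x) :
    (exp a * x) ^ 2 = 1 := by
  have h : exp a * x * exp a = x := by
    simpa using SemiconjBy.exp_neg_mul_mul_exp_eq_self (x := x) (a := a) (b := -a) hax
  rw [sq, ← mul_assoc, h, hx]

theorem exp_mul_sq_of_commute {a z : 𝔸} (hz : z * z = 1) (haz : Commute a z) :
    (exp a * z) ^ 2 = exp (2 • a) := by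
  rw [haz.exp_left.mul_pow, sq z, hz, mul_one, NormedSpace.exp_nsmul]

end ExpAnticommute

section Pauli

-- Any normed-ring structure on matrices inducing their usual topology makes the lemmas above apply.
open scoped Matrix.Norms.Operator

theorem exp_smul_pauliZ_mul_pauliX_sq (c : ℂ) :
    (exp (c • !![1, 0; 0, -1]) * !![0, 1; 1, 0] : Matrix (Fin 2) (Fin 2) ℂ) ^ 2 = 1 := by
  refine exp_mul_sq_of_anticommute ?_ ?_
  · ext i j; fin_cases i <;> fin_cases j <;> simp
  · ext i j; fin_cases i <;> fin_cases j <;> simp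

theorem exp_smul_pauliZ_mul_pauliZ_sq (c : ℂ) :
    (exp (c • !![1, 0; 0, -1]) * !![1, 0; 0, -1] : Matrix (Fin 2) (Fin 2) ℂ) ^ 2 =
      exp ((2 * c) • !![1, 0; 0, -1]) := by
  refine (exp_mul_sq_of_commute ?_ ((Commute.refl _).smul_left c)).trans ?_
  · ext i j; fin_cases i <;> fin_cases j <;> simp
  · congr 1; rw [two_nsmul, ← add_smul, two_mul]

end Pauli

/-- For a diagonal 0-1 matrix `Φ`, with `U = X ⊗ (I − Φ) + Z ⊗ Φ`, the square
`U_γ = ((exp(iγZ) ⊗ I) · U)²` equals `I ⊗ I + (exp(2iγZ) − I) ⊗ Φ`. -/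
theorem stmt_3 {n : ℕ} (f : Fin n → ℂ) (hf : ∀ j, f j = 0 ∨ f j = 1)
    (Φ : Matrix (Fin n) (Fin n) ℂ) (hΦ : Φ = Matrix.diagonal f)
    (γ : ℝ)
    (X Z : Matrix (Fin 2) (Fin 2) ℂ)
    (hX : X = !![0, 1; 1, 0]) (hZ : Z = !![1, 0; 0, -1])
    (U : Matrix (Fin 2 × Fin n) (Fin 2 × Fin n) ℂ)
    (hU : U = X ⊗ₖ (1 - Φ) + Z ⊗ₖ Φ)
    (Uγ : Matrix (Fin 2 × Fin n) (Fin 2 × Fin n) ℂ)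
    (hUγ : Uγ = ((NormedSpace.exp ((Complex.I * γ) • Z) ⊗ₖ
        (1 : Matrix (Fin n) (Fin n) ℂ)) * U) ^ 2) :
    Uγ = (1 : Matrix (Fin 2) (Fin 2) ℂ) ⊗ₖ (1 : Matrix (Fin n) (Fin n) ℂ) +
      (NormedSpace.exp ((2 * Complex.I * γ) • Z) - 1) ⊗ₖ Φ := by
  have hΦ_idem : IsIdempotentElem Φ := hΦ ▸ isIdempotentElem_diagonal fun j ↦ by
    rcases hf j with h | h <;> simp [h, IsIdempotentElem]
  subst hX hZ hU hUγ
  rw [kronecker_one_mul_kronecker_add_kronecker,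
    kronecker_one_sub_add_kronecker_sq_of_mul_self_eq_one hΦ_idem
      (by rw [← sq, exp_smul_pauliZ_mul_pauliX_sq]),
    ← sq, exp_smul_pauliZ_mul_pauliZ_sq, mul_assoc]
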